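/- arXiv:1706.06986 — 3 statements merged into one kernel-verified Lean document; each statement's English description precedes it below -/
import Mathlib

section
/- Let Z_• be a green nonlinear stability function, M a Λ-module. Define t₀(M) as the smallest t with μ_t(M)=t and t₁(M) as the minimum of t₀(M') over nonzero submodules M' ⊆ M. If M is Z_t-semistable with μ_t(M)=t for some t, then t = t₀(M) = t₁(M). Conversely, if t₀(M) = t₁(M), then M is Z_{t₀(M)}-semistable. -/
/-! For a nonzero submodule `K ⊆ M`, `μ_t(K)` is continuous and bounded in `t` (`a_t`, `b_t` being
eventually constant), so `μ_t(K) - t` is positive far to the left and `t₀(K)` is its first zero;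
hence `t ≤ t₀(K)` forces `t ≤ μ_t(K)`. Consider `g(t) = min_K (μ_t(K) - t)` over the nonzero
submodules `K ⊆ M`, a minimum of finitely many continuous functions because the dimension vectors
involved are bounded by `d M`. Then `g t ≥ 0` says that every `K` has slope at least `t` at time
`t`, so wherever `g` vanishes the submodules attaining the minimum are `Z_t`-semistable with
`μ_t(K) = t`, and greenness makes each `μ_t(K) - t` change sign from `+` to `-` there. Hence `g`
crosses zero downwards at each of its zeros and is therefore negative to the right of any zero.
Since `g(t₁(M)) = 0`, a semistable pair `(M, t)`, for which `g t ≥ 0`, satisfies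
`t ≤ t₁(M) ≤ t₀(M) ≤ t`. Conversely, if `t₀(M) = t₁(M)` then `t₀(M) ≤ t₀(K)` for every `K`, which
gives semistability at `t₀(M)`. -/

open scoped BigOperators

noncomputable section

/-- Dot product of a real vector with a dimension vector. -/
def dprod {n : ℕ} (x : Fin n → ℝ) (v : Fin n → ℕ) : ℝ := ∑ i, x i * (v i : ℝ)

/-- Slope of a dimension vector with respect to a linear stability function
`Z(x) = a·x + i b·x`. -/
def zslope {n : ℕ} (a b : Fin n → ℝ) (v : Fin n → ℕ) : ℝ := dprod a v / dprod b v

/-- The semistability set `D(M)` of a module `M`, with respect to a dimension-vector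
assignment `d`. -/
def DSet {Λ : Type} [Ring Λ] {n : ℕ}
    (d : (N : Type) → [AddCommGroup N] → [Module Λ N] → Fin n → ℕ)
    (M : Type) [AddCommGroup M] [Module Λ M] : Set (Fin n → ℝ) :=
  {x | dprod x (d M) = 0 ∧ ∀ M' : Submodule Λ M, dprod x (d ↥M') ≤ 0}

/-- A module is Schurian if it is nonzero and every nonzero endomorphism is invertible,
i.e. its endomorphism ring is a division algebra. -/
def Schurian (Λ : Type) [Ring Λ] (M : Type) [AddCommGroup M] [Module Λ M] : Prop :=
  (∃ y : M, y ≠ 0) ∧ ∀ f : M →ₗ[Λ] M, f ≠ 0 → Function.Bijective f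

/-- `X` belongs to `E(M)`: `X` admits a finite filtration with all subquotients
isomorphic to `M`. -/
def IsFiltered (Λ : Type) [Ring Λ] (M : Type) [AddCommGroup M] [Module Λ M]
    (X : Type) [AddCommGroup X] [Module Λ X] : Prop :=
  ∃ (k : ℕ) (F : Fin (k + 1) → Submodule Λ X), Monotone F ∧ F 0 = ⊥ ∧ F (Fin.last k) = ⊤ ∧
    ∀ i : Fin k, Nonempty
      ((↥(F i.succ) ⧸ Submodule.comap (F i.succ).subtype (F i.castSucc)) ≃ₗ[Λ] M)

/-- Slope at time `t` of a dimension vector, for a nonlinear stability function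
`Z_t(x) = a_t·x + i b_t·x`. -/
def muZ {n : ℕ} (a b : ℝ → Fin n → ℝ) (t : ℝ) (v : Fin n → ℕ) : ℝ :=
  dprod (a t) v / dprod (b t) v

/-- `M` is `Z_t`-semistable: every nonzero submodule has zslope at least that of `M`. -/
def Semistable {Λ : Type} [Ring Λ] {n : ℕ}
    (d : (N : Type) → [AddCommGroup N] → [Module Λ N] → Fin n → ℕ)
    (a b : ℝ → Fin n → ℝ) (t : ℝ)
    (M : Type) [AddCommGroup M] [Module Λ M] : Prop :=
  ∀ M' : Submodule Λ M, M' ≠ ⊥ → muZ a b t (d M) ≤ muZ a b t (d ↥M')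

/-- The nonlinear stability function given by `(a, b)` is green (for `Λ`): at every
semistable pair `(N, t₀)` (with `N` a nonzero finite-length `Λ`-module, `N`
`Z_{t₀}`-semistable and `μ_{t₀}(N) = t₀`), the derivative of `t ↦ μ_t(N)` at `t₀`
is `< 1`. -/
def ZGreen {Λ : Type} [Ring Λ] {n : ℕ}
    (d : (N : Type) → [AddCommGroup N] → [Module Λ N] → Fin n → ℕ)
    (a b : ℝ → Fin n → ℝ) : Prop :=
  ∀ (N : Type) [AddCommGroup N] [Module Λ N] [IsNoetherian Λ N] [IsArtinian Λ N] (t₀ : ℝ),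
    (∃ y : N, y ≠ 0) → Semistable d a b t₀ N → muZ a b t₀ (d N) = t₀ →
      deriv (fun t => muZ a b t (d N)) t₀ < 1

/-- `t₀(M)`: the smallest `t` with `μ_t(M) = t` (as an infimum). -/
def tzero {n : ℕ} (a b : ℝ → Fin n → ℝ) (v : Fin n → ℕ) : ℝ := sInf {t | muZ a b t v = t}

/-- `t₁(M)`: the smallest value of `t₀(M')` over nonzero submodules `M' ⊆ M`. -/
def tone {Λ : Type} [Ring Λ] {n : ℕ}
    (d : (N : Type) → [AddCommGroup N] → [Module Λ N] → Fin n → ℕ)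
    (a b : ℝ → Fin n → ℝ)
    (M : Type) [AddCommGroup M] [Module Λ M] : ℝ :=
  sInf {s : ℝ | ∃ M' : Submodule Λ M, M' ≠ ⊥ ∧ s = tzero a b (d ↥M')}

open Set Filter Topology

section RealFunctions

variable {f : ℝ → ℝ}

theorem bddBelow_fixedPoints_of_bddBelow_range (hlo : BddBelow (range f)) :
    BddBelow {t | f t = t} := by
  obtain ⟨m, hm⟩ := hlo
  exact ⟨m, fun t ht => ht ▸ hm (mem_range_self t)⟩

theorem le_apply_of_le_sInf_fixedPoints (hf : Continuous f) (hlo : BddBelow (range f)) {r : ℝ}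
    (hr : r ≤ sInf {t | f t = t}) : r ≤ f r := by
  by_contra! hfr
  obtain ⟨m, hm⟩ := hlo
  have hmin : min m r ≤ f (min m r) := (min_le_left m r).trans (hm (mem_range_self _))
  obtain ⟨c, hc, hfc⟩ :=
    exists_mem_Icc_isFixedPt hf.continuousOn (min_le_right m r) hmin hfr.le
  have hcr : c = r :=
    le_antisymm hc.2 (hr.trans (csInf_le (bddBelow_fixedPoints_of_bddBelow_range ⟨m, hm⟩) hfc))
  exact hfr.ne (hcr ▸ hfc)

theorem apply_sInf_fixedPoints (hf : Continuous f) (hlo : BddBelow (range f))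
    (hhi : BddAbove (range f)) : f (sInf {t | f t = t}) = sInf {t | f t = t} := by
  obtain ⟨m, hm⟩ := hlo
  obtain ⟨M, hM⟩ := hhi
  obtain ⟨c, -, hfc⟩ := exists_mem_Icc_isFixedPt hf.continuousOn
    ((hm (mem_range_self 0)).trans (hM (mem_range_self 0))) (hm (mem_range_self m))
    (hM (mem_range_self M))
  exact (isClosed_eq hf continuous_id).csInf_mem ⟨c, hfc⟩
    (bddBelow_fixedPoints_of_bddBelow_range ⟨m, hm⟩)

theorem isBounded_range_of_const_outside (hf : Continuous f) {T₁ T₂ : ℝ}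
    (h₁ : ∀ t ≤ T₁, f t = f T₁) (h₂ : ∀ t, T₂ ≤ t → f t = f T₂) :
    Bornology.IsBounded (range f) := by
  have hIcc := ((isCompact_Icc (a := T₁) (b := T₂)).image hf).isBounded
  refine ((hIcc.insert (f T₁)).insert (f T₂)).subset ?_
  rintro _ ⟨t, rfl⟩
  rcases le_total t T₁ with ht | ht
  · exact .inr (.inl (h₁ t ht))
  rcases le_total T₂ t with ht' | ht'
  · exact .inl (h₂ t ht')
  · exact .inr (.inr ⟨t, ⟨ht, ht'⟩, rfl⟩)

end RealFunctions

def CrossesZeroDownward (g : ℝ → ℝ) (z : ℝ) : Prop :=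
  (∀ᶠ x in 𝓝[<] z, 0 < g x) ∧ ∀ᶠ x in 𝓝[>] z, g x < 0

theorem crossesZeroDownward_of_deriv_neg {g : ℝ → ℝ} {z : ℝ} (hg : deriv g z < 0)
    (hz : g z = 0) : CrossesZeroDownward g z := by
  have hsign := eventually_nhdsWithin_sign_eq_of_deriv_neg hg hz
  constructor
  · filter_upwards [nhdsWithin_le_nhds hsign, self_mem_nhdsWithin] with x hx (hxz : x < z)
    rwa [← sign_eq_one_iff, hx, sign_eq_one_iff, sub_pos]
  · filter_upwards [nhdsWithin_le_nhds hsign, self_mem_nhdsWithin] with x hx (hxz : z < x)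
    rwa [← sign_eq_neg_one_iff, hx, sign_eq_neg_one_iff, sub_neg]

theorem CrossesZeroDownward.finset_inf' {ι : Type*} {s : Finset ι} (hs : s.Nonempty)
    {F : ι → ℝ → ℝ} (hF : ∀ i ∈ s, Continuous (F i)) {z : ℝ}
    (hz : s.inf' hs (F · z) = 0) (hcross : ∀ i ∈ s, F i z = 0 → CrossesZeroDownward (F i) z) :
    CrossesZeroDownward (fun x => s.inf' hs (F · x)) z := by
  constructor
  · have hpos : ∀ i ∈ s, ∀ᶠ x in 𝓝[<] z, 0 < F i x := by
      intro i hi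
      rcases (hz.symm.trans_le (s.inf'_le _ hi)).eq_or_lt with hi0 | hi0
      · exact (hcross i hi hi0.symm).1
      · exact nhdsWithin_le_nhds ((hF i hi).continuousAt.eventually (lt_mem_nhds hi0))
    filter_upwards [s.eventually_all.2 hpos] with x hx
    exact (Finset.lt_inf'_iff hs).2 hx
  · obtain ⟨i, hi, hiz⟩ := s.exists_mem_eq_inf' hs (F · z)
    filter_upwards [(hcross i hi (hiz ▸ hz)).2] with x hx
    exact (s.inf'_le _ hi).trans_lt hx

theorem le_of_crossesZeroDownward {g : ℝ → ℝ} (hg : Continuous g)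
    (hcross : ∀ z, g z = 0 → CrossesZeroDownward g z) {z s : ℝ} (hz : g z = 0)
    (hs : 0 ≤ g s) : s ≤ z := by
  by_contra! hzs
  -- The least zero of `g` in `[r₀, s]` would be approached from the left by positive values of
  -- `g`, producing an even smaller zero.
  obtain ⟨r₀, hr₀, hr₀s⟩ := ((hcross z hz).2.and (Ioo_mem_nhdsGT hzs)).exists
  set Z := {x ∈ Icc r₀ s | g x = 0}
  have hZ : Z.Nonempty := by
    obtain ⟨x, hx, hgx⟩ := intermediate_value_Icc hr₀s.2.le hg.continuousOn ⟨hr₀.le, hs⟩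
    exact ⟨x, hx, hgx⟩
  have hmem : sInf Z ∈ Z :=
    (isClosed_Icc.inter (isClosed_eq hg continuous_const)).csInf_mem hZ ⟨r₀, fun x hx => hx.1.1⟩
  have hr₀Z : r₀ < sInf Z := hmem.1.1.lt_of_ne fun h => hr₀.ne (h ▸ hmem.2)
  obtain ⟨r₁, hr₁, hr₁Z⟩ := ((hcross _ hmem.2).1.and (Ioo_mem_nhdsLT hr₀Z)).exists
  obtain ⟨x, hx, hgx⟩ := intermediate_value_Icc hr₁Z.1.le hg.continuousOn ⟨hr₀.le, hr₁.le⟩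
  have hxZ : x ∈ Z := ⟨⟨hx.1, hx.2.trans (hr₁Z.2.le.trans hmem.1.2)⟩, hgx⟩
  exact (hx.2.trans_lt hr₁Z.2).not_ge (csInf_le ⟨r₀, fun y hy => hy.1.1⟩ hxZ)

section Slope

variable {n : ℕ} {a b : ℝ → Fin n → ℝ}

theorem dprod_pos {x : Fin n → ℝ} (hx : ∀ i, 0 < x i) {v : Fin n → ℕ} (hv : v ≠ 0) :
    0 < dprod x v := by
  obtain ⟨i, hi⟩ := Function.ne_iff.mp hv
  refine Finset.sum_pos' (fun j _ => mul_nonneg (hx j).le (Nat.cast_nonneg _))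
    ⟨i, Finset.mem_univ i, ?_⟩
  exact mul_pos (hx i) (by exact_mod_cast Nat.pos_of_ne_zero hi)

theorem differentiable_muZ (ha : ∀ i, Differentiable ℝ fun t => a t i)
    (hb : ∀ i, Differentiable ℝ fun t => b t i) (hbpos : ∀ t i, 0 < b t i)
    {v : Fin n → ℕ} (hv : v ≠ 0) : Differentiable ℝ fun t => muZ a b t v := by
  intro t
  simp only [muZ, dprod]
  refine DifferentiableAt.div ?_ ?_ (dprod_pos (hbpos t) hv).ne'
  · exact DifferentiableAt.fun_sum fun i _ => ((ha i) t).mul_const _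
  · exact DifferentiableAt.fun_sum fun i _ => ((hb i) t).mul_const _

theorem isBounded_range_muZ {v : Fin n → ℕ} (hcont : Continuous fun t => muZ a b t v)
    {T₁ T₂ : ℝ} (h₁ : ∀ t ≤ T₁, a t = a T₁ ∧ b t = b T₁)
    (h₂ : ∀ t, T₂ ≤ t → a t = a T₂ ∧ b t = b T₂) :
    Bornology.IsBounded (range fun t => muZ a b t v) :=
  isBounded_range_of_const_outside hcont (T₁ := T₁) (T₂ := T₂)
    (fun t ht => by simp only [muZ, (h₁ t ht).1, (h₁ t ht).2])
    (fun t ht => by simp only [muZ, (h₂ t ht).1, (h₂ t ht).2])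

variable {v : Fin n → ℕ}

theorem muZ_tzero (hcont : Continuous fun t => muZ a b t v)
    (hbdd : Bornology.IsBounded (range fun t => muZ a b t v)) :
    muZ a b (tzero a b v) v = tzero a b v :=
  apply_sInf_fixedPoints hcont hbdd.bddBelow hbdd.bddAbove

theorem le_muZ_of_le_tzero (hcont : Continuous fun t => muZ a b t v)
    (hbdd : Bornology.IsBounded (range fun t => muZ a b t v)) {r : ℝ} (hr : r ≤ tzero a b v) :
    r ≤ muZ a b r v :=
  le_apply_of_le_sInf_fixedPoints hcont hbdd.bddBelow hr

end Slope

section Modules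

variable {Λ : Type} [Ring Λ] {n : ℕ}
  {d : (N : Type) → [AddCommGroup N] → [Module Λ N] → Fin n → ℕ}
  {M : Type} [AddCommGroup M] [Module Λ M]

theorem exists_ne_zero_of_ne_bot {K : Submodule Λ M} (hK : K ≠ ⊥) :
    ∃ y : K, y ≠ 0 :=
  haveI := Submodule.nontrivial_iff_ne_bot.2 hK
  exists_ne 0

theorem top_ne_bot_of_exists_ne_zero (hM : ∃ y : M, y ≠ 0) : (⊤ : Submodule Λ M) ≠ ⊥ :=
  (Submodule.ne_bot_iff ⊤).2 (hM.imp fun _ hy => ⟨Submodule.mem_top, hy⟩)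

theorem dim_ne_zero
    (hzero : ∀ (N : Type) [AddCommGroup N] [Module Λ N] [IsNoetherian Λ N] [IsArtinian Λ N],
      (d N = 0 ↔ ∀ y : N, y = 0))
    [IsNoetherian Λ M] [IsArtinian Λ M] (hM : ∃ y : M, y ≠ 0) : d M ≠ 0 := by
  obtain ⟨y, hy⟩ := hM
  exact fun h => hy ((hzero M).1 h y)

open Classical in
def nonzeroSubDims (d : (N : Type) → [AddCommGroup N] → [Module Λ N] → Fin n → ℕ)
    (M : Type) [AddCommGroup M] [Module Λ M] : Finset (Fin n → ℕ) :=
  (Finset.Icc 0 (d M)).filter fun v => ∃ K : Submodule Λ M, K ≠ ⊥ ∧ d K = v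

theorem mem_nonzeroSubDims
    (hadd : ∀ (N : Type) [AddCommGroup N] [Module Λ N] [IsNoetherian Λ N] [IsArtinian Λ N]
      (A : Submodule Λ N), d ↥A + d (N ⧸ A) = d N)
    [IsNoetherian Λ M] [IsArtinian Λ M] {v : Fin n → ℕ} :
    v ∈ nonzeroSubDims d M ↔ ∃ K : Submodule Λ M, K ≠ ⊥ ∧ d K = v := by
  classical
  rw [nonzeroSubDims, Finset.mem_filter, Finset.mem_Icc, and_iff_right_iff_imp]
  rintro ⟨K, -, rfl⟩
  exact ⟨zero_le, hadd M K ▸ le_self_add⟩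

theorem isLeast_tone {a b : ℝ → Fin n → ℝ}
    (hadd : ∀ (N : Type) [AddCommGroup N] [Module Λ N] [IsNoetherian Λ N] [IsArtinian Λ N]
      (A : Submodule Λ N), d ↥A + d (N ⧸ A) = d N)
    [IsNoetherian Λ M] [IsArtinian Λ M] (hM : ∃ y : M, y ≠ 0) :
    IsLeast {s | ∃ K : Submodule Λ M, K ≠ ⊥ ∧ s = tzero a b (d K)} (tone d a b M) := by
  have hfin : {s | ∃ K : Submodule Λ M, K ≠ ⊥ ∧ s = tzero a b (d K)}.Finite := by
    refine ((nonzeroSubDims d M).finite_toSet.image (tzero a b)).subset ?_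
    rintro _ ⟨K, hK, rfl⟩
    exact ⟨d K, mem_nonzeroSubDims hadd |>.2 ⟨K, hK, rfl⟩, rfl⟩
  exact ⟨Set.Nonempty.csInf_mem ⟨_, ⊤, top_ne_bot_of_exists_ne_zero hM, rfl⟩ hfin,
    fun _ hs => csInf_le hfin.bddBelow hs⟩

variable {a b : ℝ → Fin n → ℝ}

theorem semistable_of_forall_le_muZ
    (hiso : ∀ (N N' : Type) [AddCommGroup N] [Module Λ N] [AddCommGroup N'] [Module Λ N']
      [IsNoetherian Λ N] [IsArtinian Λ N], (N ≃ₗ[Λ] N') → d N = d N')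
    [IsNoetherian Λ M] [IsArtinian Λ M] {r : ℝ}
    (hr : ∀ K : Submodule Λ M, K ≠ ⊥ → r ≤ muZ a b r (d K)) {K : Submodule Λ M}
    (hK : muZ a b r (d K) = r) : Semistable d a b r K := by
  intro K' hK'
  rw [hK, hiso _ _ (Submodule.equivMapOfInjective K.subtype K.injective_subtype K')]
  refine hr _ fun h => hK' (Submodule.map_injective_of_injective K.injective_subtype ?_)
  rw [h, Submodule.map_bot]

theorem crossesZeroDownward_of_semistable (hgreen : ZGreen d a b)
    {N : Type} [AddCommGroup N] [Module Λ N] [IsNoetherian Λ N] [IsArtinian Λ N]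
    (hN : ∃ y : N, y ≠ 0) (hdiff : Differentiable ℝ fun t => muZ a b t (d N)) {z : ℝ}
    (hss : Semistable d a b z N) (hz : muZ a b z (d N) = z) :
    CrossesZeroDownward (fun t => muZ a b t (d N) - t) z := by
  refine crossesZeroDownward_of_deriv_neg ?_ (sub_eq_zero.2 hz)
  rw [deriv_fun_sub (hdiff z) differentiableAt_fun_id, deriv_id'', sub_neg]
  exact hgreen N z hN hss hz

theorem le_tone_of_forall_le_muZ
    (hiso : ∀ (N N' : Type) [AddCommGroup N] [Module Λ N] [AddCommGroup N'] [Module Λ N']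
      [IsNoetherian Λ N] [IsArtinian Λ N], (N ≃ₗ[Λ] N') → d N = d N')
    (hadd : ∀ (N : Type) [AddCommGroup N] [Module Λ N] [IsNoetherian Λ N] [IsArtinian Λ N]
      (A : Submodule Λ N), d ↥A + d (N ⧸ A) = d N)
    (hzero : ∀ (N : Type) [AddCommGroup N] [Module Λ N] [IsNoetherian Λ N] [IsArtinian Λ N],
      (d N = 0 ↔ ∀ y : N, y = 0))
    (hdiff : ∀ v, v ≠ 0 → Differentiable ℝ fun t => muZ a b t v)
    (hbdd : ∀ v, v ≠ 0 → Bornology.IsBounded (range fun t => muZ a b t v))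
    (hgreen : ZGreen d a b) [IsNoetherian Λ M] [IsArtinian Λ M] (hM : ∃ y : M, y ≠ 0)
    {s : ℝ} (hs : ∀ K : Submodule Λ M, K ≠ ⊥ → s ≤ muZ a b s (d K)) :
    s ≤ tone d a b M := by
  have hmem {v} := mem_nonzeroSubDims (d := d) (M := M) hadd (v := v)
  have hdK {K : Submodule Λ M} (hK : K ≠ ⊥) : d K ≠ 0 :=
    dim_ne_zero hzero (exists_ne_zero_of_ne_bot hK)
  obtain ⟨K₀, hK₀, htone⟩ := (isLeast_tone (a := a) (b := b) hadd hM).1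
  have hS : (nonzeroSubDims d M).Nonempty := ⟨d K₀, hmem.2 ⟨K₀, hK₀, rfl⟩⟩
  have hF : ∀ v ∈ nonzeroSubDims d M, Continuous fun t => muZ a b t v - t := by
    intro v hv
    obtain ⟨K, hK, rfl⟩ := hmem.1 hv
    exact (hdiff _ (hdK hK)).continuous.sub continuous_id
  set g : ℝ → ℝ := fun t => (nonzeroSubDims d M).inf' hS fun v => muZ a b t v - t
  have hg_nonneg {t} : 0 ≤ g t ↔ ∀ K : Submodule Λ M, K ≠ ⊥ → t ≤ muZ a b t (d K) := by
    simp only [g, Finset.le_inf'_iff, sub_nonneg]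
    exact ⟨fun h K hK => h _ (hmem.2 ⟨K, hK, rfl⟩), fun h v hv => by
      obtain ⟨K, hK, rfl⟩ := hmem.1 hv; exact h K hK⟩
  have hcross (z : ℝ) (hz : g z = 0) : CrossesZeroDownward g z := by
    refine CrossesZeroDownward.finset_inf' hS hF hz fun v hv hvz => ?_
    obtain ⟨K, hK, rfl⟩ := hmem.1 hv
    have hfix : muZ a b z (d K) = z := sub_eq_zero.1 hvz
    exact crossesZeroDownward_of_semistable hgreen (exists_ne_zero_of_ne_bot hK)
      (hdiff _ (hdK hK)) (semistable_of_forall_le_muZ hiso (hg_nonneg.1 hz.ge) hfix) hfix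
  have hg_tone : g (tone d a b M) = 0 := by
    refine le_antisymm ?_ (hg_nonneg.2 fun K hK => ?_)
    · refine (Finset.inf'_le _ (hmem.2 ⟨K₀, hK₀, rfl⟩)).trans_eq (sub_eq_zero.2 ?_)
      rw [htone]
      exact muZ_tzero (hdiff _ (hdK hK₀)).continuous (hbdd _ (hdK hK₀))
    · exact le_muZ_of_le_tzero (hdiff _ (hdK hK)).continuous (hbdd _ (hdK hK))
        ((isLeast_tone hadd hM).2 ⟨K, hK, rfl⟩)
  exact le_of_crossesZeroDownward (Continuous.finset_inf'_apply hS hF) hcross hg_tone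
    (hg_nonneg.2 hs)

end Modules

/-- For a green nonlinear stability function and a module `M`: if `M` is
`Z_t`-semistable with `μ_t(M) = t` for some `t`, then `t = t₀(M) = t₁(M)`; conversely, if
`t₀(M) = t₁(M)` then `M` is `Z_{t₀(M)}`-semistable. -/
theorem stmt12 (Λ : Type) [Ring Λ] {n : ℕ}
    (d : (N : Type) → [AddCommGroup N] → [Module Λ N] → Fin n → ℕ)
    (hiso : ∀ (N N' : Type) [AddCommGroup N] [Module Λ N] [AddCommGroup N'] [Module Λ N']
      [IsNoetherian Λ N] [IsArtinian Λ N], (N ≃ₗ[Λ] N') → d N = d N')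
    (hadd : ∀ (N : Type) [AddCommGroup N] [Module Λ N] [IsNoetherian Λ N] [IsArtinian Λ N]
      (A : Submodule Λ N), d ↥A + d (N ⧸ A) = d N)
    (hzero : ∀ (N : Type) [AddCommGroup N] [Module Λ N] [IsNoetherian Λ N] [IsArtinian Λ N],
      (d N = 0 ↔ ∀ y : N, y = 0))
    (a b : ℝ → Fin n → ℝ)
    (hbpos : ∀ t i, 0 < b t i)
    (hC1a : ∀ i, ContDiff ℝ 1 (fun t => a t i))
    (hC1b : ∀ i, ContDiff ℝ 1 (fun t => b t i))
    (hconst : ∃ T : ℝ, 0 < T ∧ (∀ t, T ≤ t → a t = a T ∧ b t = b T) ∧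
      (∀ t, t ≤ -T → a t = a (-T) ∧ b t = b (-T)))
    (hgreen : ZGreen d a b)
    (M : Type) [AddCommGroup M] [Module Λ M] [IsNoetherian Λ M] [IsArtinian Λ M]
    (hM0 : ∃ y : M, y ≠ 0) :
    (∀ t : ℝ, Semistable d a b t M → muZ a b t (d M) = t →
      t = tzero a b (d M) ∧ t = tone d a b M) ∧
    (tzero a b (d M) = tone d a b M → Semistable d a b (tzero a b (d M)) M) := by
  obtain ⟨T, -, hTpos, hTneg⟩ := hconst
  have hdiff (v : Fin n → ℕ) (hv : v ≠ 0) : Differentiable ℝ fun t => muZ a b t v :=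
    differentiable_muZ (fun i => (hC1a i).differentiable one_ne_zero)
      (fun i => (hC1b i).differentiable one_ne_zero) hbpos hv
  have hbdd (v : Fin n → ℕ) (hv : v ≠ 0) : Bornology.IsBounded (range fun t => muZ a b t v) :=
    isBounded_range_muZ (hdiff v hv).continuous hTneg hTpos
  have hdM : d M ≠ 0 := dim_ne_zero hzero hM0
  have htone_le {K : Submodule Λ M} (hK : K ≠ ⊥) : tone d a b M ≤ tzero a b (d K) :=
    (isLeast_tone hadd hM0).2 ⟨K, hK, rfl⟩
  have htone_le_tzero : tone d a b M ≤ tzero a b (d M) := by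
    simpa only [hiso _ _ Submodule.topEquiv] using htone_le (top_ne_bot_of_exists_ne_zero hM0)
  refine ⟨fun t hss hfix => ?_, fun heq K hK => ?_⟩
  · have hle_tone : t ≤ tone d a b M :=
      le_tone_of_forall_le_muZ hiso hadd hzero hdiff hbdd hgreen hM0 fun K hK =>
        hfix.symm.trans_le (hss K hK)
    have htzero_le : tzero a b (d M) ≤ t :=
      csInf_le (bddBelow_fixedPoints_of_bddBelow_range (hbdd _ hdM).bddBelow) hfix
    constructor <;> linarith
  · have hdK := dim_ne_zero hzero (exists_ne_zero_of_ne_bot hK)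
    rw [muZ_tzero (hdiff _ hdM).continuous (hbdd _ hdM)]
    exact le_muZ_of_le_tzero (hdiff _ hdK).continuous (hbdd _ hdK) (heq.trans_le (htone_le hK))
end
end

section
/- Let M₁, ..., M_m be a maximal forward hom-orthogonal sequence of Schurian Λ-modules (Hom(M_i, M_j)=0 for i<j, each M_i Schurian, and no module can be inserted preserving this). Then for every Λ-module X there is a filtration 0 = X₀ ⊆ X₁ ⊆ ... ⊆ X_m = X with X_k/X_{k−1} ∈ E(M_k) for each k, where E(M) denotes the category of iterated self-extensions of M. -/
open scoped BigOperators

noncomputable section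

/-!
For `k ≤ m` let `T_k X` be the largest submodule of `X` with no nonzero map to any `M j`,
`j ≥ k`; it exists since this class is closed under quotients and sums and `X` is Noetherian.
Take `X_k = T_k X`. Maximality at position `0` gives `T_0 X = 0`, and `T_m X = X`. The
subquotient `Y = T_{k+1} X / T_k X` maps to no `M j` with `j > k`, while, the class being closed
under extensions, each nonzero submodule `V` of `Y` maps nontrivially to `M k`. Maximality makes any nonzero `g : V → M k` surjective and shows that
`ker g` still maps to no `M j` with `j > k`, so `Y ∈ E(M k)` by induction on submodules.
-/

section Filtrations

variable {Λ : Type} [Ring Λ] {N A B : Type} [AddCommGroup N] [Module Λ N]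
  [AddCommGroup A] [Module Λ A] [AddCommGroup B] [Module Λ B]

def Submodule.subquotientEquivMapOfInjective (ψ : A →ₗ[Λ] B) (hψ : Function.Injective ψ)
    (p q : Submodule Λ A) :
    (↥q ⧸ p.comap q.subtype) ≃ₗ[Λ] (↥(q.map ψ) ⧸ (p.map ψ).comap (q.map ψ).subtype) :=
  Submodule.Quotient.equiv _ _ (Submodule.equivMapOfInjective ψ hψ q) <| by
    ext ⟨_, x, hx, rfl⟩
    have hsymm : (Submodule.equivMapOfInjective ψ hψ q).symm ⟨ψ x, _⟩ = ⟨x, hx⟩ :=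
      (LinearEquiv.symm_apply_eq _).2 rfl
    simp [Submodule.mem_map_equiv, hsymm, hψ.eq_iff]

lemma IsFiltered.of_subsingleton [Subsingleton A] : IsFiltered Λ N A :=
  ⟨0, fun _ => ⊥, monotone_const, rfl, Subsingleton.elim _ _, Fin.elim0⟩

lemma IsFiltered.of_linearEquiv (e : A ≃ₗ[Λ] B) (h : IsFiltered Λ N A) : IsFiltered Λ N B := by
  obtain ⟨k, F, hF, hbot, htop, hquot⟩ := h
  refine ⟨k, fun i => (F i).map (e : A →ₗ[Λ] B), fun i j hij => Submodule.map_mono (hF hij),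
    by simp [hbot], by simp [htop], fun i => ?_⟩
  obtain ⟨e'⟩ := hquot i
  exact ⟨(Submodule.subquotientEquivMapOfInjective _ e.injective _ _).symm.trans e'⟩

lemma IsFiltered.of_quotientEquiv (W : Submodule Λ A) (hW : IsFiltered Λ N W)
    (e : (A ⧸ W) ≃ₗ[Λ] N) : IsFiltered Λ N A := by
  obtain ⟨k, F, hF, hbot, htop, hquot⟩ := hW
  set G : Fin (k + 2) → Submodule Λ A := Fin.snoc (fun i => (F i).map W.subtype) ⊤
  have hG : ∀ i, G i.castSucc = (F i).map W.subtype := fun i => Fin.snoc_castSucc ..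
  have hG' : G (Fin.last _) = ⊤ := Fin.snoc_last ..
  refine ⟨k + 1, G, Fin.monotone_iff_le_succ.2 fun i => ?_, ?_, hG', fun i => ?_⟩
  · induction i using Fin.lastCases with
    | last => rw [Fin.succ_last, hG']; exact le_top
    | cast i =>
      rw [hG, Fin.succ_castSucc, hG]
      exact Submodule.map_mono (hF (Fin.castSucc_le_succ i))
  · rw [← Fin.castSucc_zero, hG, hbot, Submodule.map_bot]
  · induction i using Fin.lastCases with
    | last =>
      rw [Fin.succ_last, hG', hG, htop, Submodule.map_top, Submodule.range_subtype]
      refine ⟨(Submodule.Quotient.equiv _ W Submodule.topEquiv ?_).trans e⟩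
      ext x
      simp
    | cast i =>
      rw [hG, Fin.succ_castSucc, hG]
      obtain ⟨e'⟩ := hquot i
      exact ⟨(Submodule.subquotientEquivMapOfInjective _ W.injective_subtype _ _).symm.trans e'⟩

end Filtrations

section HomOrthogonality

variable (Λ : Type) [Ring Λ] {m : ℕ} (M : Fin m → Type) [∀ i, AddCommGroup (M i)]
  [∀ i, Module Λ (M i)]

def NoHomsFrom (k : ℕ) (N : Type) [AddCommGroup N] [Module Λ N] : Prop :=
  ∀ i : Fin m, (i : ℕ) < k → ∀ f : M i →ₗ[Λ] N, f = 0

def NoHomsTo (k : ℕ) (N : Type) [AddCommGroup N] [Module Λ N] : Prop :=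
  ∀ j : Fin m, k ≤ (j : ℕ) → ∀ g : N →ₗ[Λ] M j, g = 0

structure IsMaximalForwardHomOrthogonal : Prop where
  schurian : ∀ i, Schurian Λ (M i)
  hom_eq_zero : ∀ i j : Fin m, i < j → ∀ f : M i →ₗ[Λ] M j, f = 0
  /-- `N` cannot be inserted just before `M k` (at the end if `k = m`). -/
  maximal : ∀ (N : Type) [AddCommGroup N] [Module Λ N] [IsNoetherian Λ N] [IsArtinian Λ N],
    (∃ y : N, y ≠ 0) → ∀ k : ℕ, k ≤ m → ¬ (NoHomsFrom Λ M k N ∧ NoHomsTo Λ M k N)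

variable {Λ M} {k l : ℕ} {A B C : Type} [AddCommGroup A] [Module Λ A] [AddCommGroup B]
  [Module Λ B] [AddCommGroup C] [Module Λ C]

lemma NoHomsTo.of_subsingleton [Subsingleton A] : NoHomsTo Λ M k A :=
  fun _ _ g => LinearMap.ext fun x => by rw [Subsingleton.elim x 0, map_zero, map_zero]

lemma NoHomsTo.mono (h : NoHomsTo Λ M k A) (hkl : k ≤ l) : NoHomsTo Λ M l A :=
  fun j hj => h j (hkl.trans hj)

lemma NoHomsTo.of_surjective (h : NoHomsTo Λ M k A) {π : A →ₗ[Λ] B}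
    (hπ : Function.Surjective π) : NoHomsTo Λ M k B :=
  fun j hj g => (LinearMap.cancel_right hπ).1 (by rw [h j hj (g ∘ₗ π), LinearMap.zero_comp])

lemma NoHomsTo.prod (hA : NoHomsTo Λ M k A) (hB : NoHomsTo Λ M k B) :
    NoHomsTo Λ M k (A × B) :=
  fun j hj g => LinearMap.prod_ext
    (by rw [hA j hj (g ∘ₗ LinearMap.inl Λ A B), LinearMap.zero_comp])
    (by rw [hB j hj (g ∘ₗ LinearMap.inr Λ A B), LinearMap.zero_comp])

lemma NoHomsTo.sup {W₁ W₂ : Submodule Λ A} (h₁ : NoHomsTo Λ M k W₁) (h₂ : NoHomsTo Λ M k W₂) :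
    NoHomsTo Λ M k ↥(W₁ ⊔ W₂) := by
  refine (h₁.prod h₂).of_surjective (π := (Submodule.inclusion le_sup_left).coprod
    (Submodule.inclusion le_sup_right)) ?_
  rintro ⟨x, hx⟩
  obtain ⟨a, ha, b, hb, rfl⟩ := Submodule.mem_sup.1 hx
  exact ⟨(⟨a, ha⟩, ⟨b, hb⟩), rfl⟩

lemma NoHomsTo.of_exact (hC : NoHomsTo Λ M k C) (hB : NoHomsTo Λ M k B) {t : C →ₗ[Λ] A}
    {s : A →ₗ[Λ] B} (hs : Function.Surjective s) (hts : LinearMap.ker s ≤ LinearMap.range t) :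
    NoHomsTo Λ M k A := by
  intro j hj φ
  have hker : LinearMap.ker s ≤ LinearMap.ker φ := by
    rintro _ hx
    obtain ⟨c, rfl⟩ := hts hx
    rw [LinearMap.mem_ker, ← LinearMap.comp_apply, hC j hj (φ ∘ₗ t), LinearMap.zero_apply]
  have hψ := hB j hj (((LinearMap.ker s).liftQ φ hker) ∘ₗ (s.quotKerEquivOfSurjective hs).symm)
  ext x
  simpa using congr($hψ (s x))

variable (Λ M) in
def torsionPart (k : ℕ) (X : Type) [AddCommGroup X] [Module Λ X] : Submodule Λ X :=
  sSup {W | NoHomsTo Λ M k W}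

lemma torsionPart_eq_top : torsionPart Λ M m A = ⊤ :=
  eq_top_iff.2 (le_sSup fun j hj => absurd j.isLt (not_lt.2 hj))

lemma le_torsionPart {W : Submodule Λ A} (h : NoHomsTo Λ M k W) : W ≤ torsionPart Λ M k A :=
  le_sSup h

variable [IsNoetherian Λ A]

lemma noHomsTo_torsionPart : NoHomsTo Λ M k (torsionPart Λ M k A) := by
  have hsup : SupClosed {W : Submodule Λ A | NoHomsTo Λ M k W} := fun _ h₁ _ h₂ => h₁.sup h₂
  exact CompleteLattice.WellFoundedGT.isSupClosedCompact _ inferInstance _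
    ⟨⊥, NoHomsTo.of_subsingleton⟩ hsup

lemma torsionPart_mono (hkl : k ≤ l) : torsionPart Λ M k A ≤ torsionPart Λ M l A :=
  le_torsionPart (noHomsTo_torsionPart.mono hkl)

lemma eq_bot_of_noHomsTo_quotient_torsionPart {W : Submodule Λ A}
    (hW : torsionPart Λ M k A ≤ W) {Z : Submodule Λ (W ⧸ (torsionPart Λ M k A).comap W.subtype)}
    (hZ : NoHomsTo Λ M k Z) : Z = ⊥ := by
  let U := torsionPart Λ M k A
  let q := U.comap W.subtype
  set Z' := Z.comap q.mkQ
  have hqZ' : q ≤ Z' := fun x hx => by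
    simp [Z', (Submodule.Quotient.mk_eq_zero q).2 hx]
  set t : U →ₗ[Λ] Z' := (Submodule.inclusion hW).codRestrict Z' fun x => hqZ' x.2
  set s : Z' →ₗ[Λ] Z := q.mkQ.restrict fun _ hx => hx
  have hs : Function.Surjective s := by
    rintro ⟨z, hz⟩
    obtain ⟨x, rfl⟩ := q.mkQ_surjective z
    exact ⟨⟨x, hz⟩, rfl⟩
  have hts : LinearMap.ker s ≤ LinearMap.range t := fun x hx =>
    ⟨⟨x, (Submodule.Quotient.mk_eq_zero q).1 congr($hx.1)⟩, rfl⟩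
  have hZ' : NoHomsTo Λ M k Z' := noHomsTo_torsionPart.of_exact hZ hs hts
  have hZ'U : Z'.map W.subtype ≤ U := le_torsionPart
    (hZ'.of_surjective (Submodule.equivMapOfInjective _ W.injective_subtype _).surjective)
  refine eq_bot_iff.2 fun z hz => ?_
  obtain ⟨x, rfl⟩ := q.mkQ_surjective z
  exact (Submodule.Quotient.mk_eq_zero q).2 (hZ'U (Submodule.mem_map_of_mem hz))

end HomOrthogonality

section Splitting

variable {Λ : Type} [Ring Λ] {A B C : Type} [AddCommGroup A] [Module Λ A] [AddCommGroup B]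
  [Module Λ B] [AddCommGroup C] [Module Λ C]

lemma LinearMap.exists_retraction_ker (π : A →ₗ[Λ] B) (f : B →ₗ[Λ] A)
    (hf : Function.Bijective (π ∘ₗ f)) :
    ∃ r : A →ₗ[Λ] LinearMap.ker π, ∀ a : LinearMap.ker π, r a = a := by
  set e := LinearEquiv.ofBijective _ hf
  have hτ : ∀ x, x - f (e.symm (π x)) ∈ LinearMap.ker π := fun x => by
    have : π (f (e.symm (π x))) = π x := e.apply_symm_apply (π x)
    rw [LinearMap.mem_ker, map_sub, this, sub_self]
  refine ⟨(LinearMap.id - f ∘ₗ e.symm.toLinearMap ∘ₗ π).codRestrict _ hτ, fun a => ?_⟩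
  ext
  simp [LinearMap.mem_ker.1 a.2]

lemma LinearMap.exists_injective_comp_eq {s : A →ₗ[Λ] B} (hs : Function.Surjective s)
    {h : A →ₗ[Λ] C} (hker : LinearMap.ker s = LinearMap.ker h) :
    ∃ ρ : B →ₗ[Λ] C, Function.Injective ρ ∧ ρ ∘ₗ s = h := by
  refine ⟨(LinearMap.ker s).liftQ h hker.le ∘ₗ (s.quotKerEquivOfSurjective hs).symm.toLinearMap,
    ?_, ?_⟩
  · rw [LinearMap.coe_comp, LinearEquiv.coe_coe]
    exact (LinearMap.ker_eq_bot.1 (Submodule.ker_liftQ_eq_bot _ _ _ hker.ge)).comp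
      (s.quotKerEquivOfSurjective hs).symm.injective
  · ext x
    simp

end Splitting

namespace IsMaximalForwardHomOrthogonal

variable {Λ : Type} [Ring Λ] {m : ℕ} {M : Fin m → Type} [∀ i, AddCommGroup (M i)]
  [∀ i, Module Λ (M i)]

lemma hom_to_submodule_eq_zero (hM : IsMaximalForwardHomOrthogonal Λ M) {i j : Fin m}
    (hij : i ≤ j) {S : Submodule Λ (M j)} (hS : S ≠ ⊤) (f : M i →ₗ[Λ] S) : f = 0 := by
  refine (LinearMap.cancel_left S.injective_subtype).1 ?_
  rw [LinearMap.comp_zero]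
  rcases hij.lt_or_eq with hij | rfl
  · exact hM.hom_eq_zero i j hij _
  · by_contra hne
    refine hS (eq_top_iff.2 fun x _ => ?_)
    obtain ⟨a, rfl⟩ := ((hM.schurian i).2 _ hne).2 x
    exact (f a).2

lemma surjective_of_ne_zero (hM : IsMaximalForwardHomOrthogonal Λ M) [∀ i, IsNoetherian Λ (M i)]
    [∀ i, IsArtinian Λ (M i)] {k : Fin m} {Y : Type} [AddCommGroup Y] [Module Λ Y]
    (hY : NoHomsTo Λ M (k + 1) Y) {g : Y →ₗ[Λ] M k} (hg : g ≠ 0) : Function.Surjective g := by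
  rw [← LinearMap.range_eq_top]
  by_contra hne
  obtain ⟨y, hy⟩ : ∃ y, g y ≠ 0 := by
    by_contra! h
    exact hg (LinearMap.ext h)
  exact hM.maximal (LinearMap.range g) ⟨⟨g y, y, rfl⟩, fun h => hy (congrArg Subtype.val h)⟩
    (k + 1) k.isLt ⟨fun i hi f => hM.hom_to_submodule_eq_zero (by omega) hne f,
      hY.of_surjective g.surjective_rangeRestrict⟩

/-- If `h : ker g → M j` were nonzero, the pushout `E = V ⧸ ker h` of `V` along `h`, an extension
of `M k` by the image of `h`, could be inserted just after `M k`: a map `M i → E` either lands in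
`image h ⊆ M j`, or splits the extension, and then `E` maps nontrivially to `M j`. -/
lemma noHomsTo_ker (hM : IsMaximalForwardHomOrthogonal Λ M) {k : Fin m} {V : Type}
    [AddCommGroup V] [Module Λ V] [IsNoetherian Λ V] [IsArtinian Λ V]
    (hV : NoHomsTo Λ M (k + 1) V) {g : V →ₗ[Λ] M k} (hg : Function.Surjective g) :
    NoHomsTo Λ M (k + 1) (LinearMap.ker g) := by
  set K := LinearMap.ker g
  intro j hj h
  by_contra hh
  set p := (LinearMap.ker h).map K.subtype
  set A := K.map p.mkQ
  set π := p.liftQ g (Submodule.map_subtype_le _ _)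
  obtain ⟨x, hx⟩ : ∃ x, h x ≠ 0 := by
    by_contra! h0
    exact hh (LinearMap.ext h0)
  have hπ : Function.Surjective π := fun y => by
    obtain ⟨x, rfl⟩ := hg y
    exact ⟨p.mkQ x, rfl⟩
  have hkerπ : LinearMap.ker π = A := Submodule.ker_liftQ _ _ _
  set s : K →ₗ[Λ] A := p.mkQ.restrict fun _ hx => Submodule.mem_map_of_mem hx
  have hs : Function.Surjective s := by
    rintro ⟨_, x, hx, rfl⟩
    exact ⟨⟨x, hx⟩, rfl⟩
  have hkers : LinearMap.ker s = LinearMap.ker h := by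
    ext x
    rw [LinearMap.mem_ker, ← Submodule.comap_map_eq_of_injective K.injective_subtype
      (LinearMap.ker h), Submodule.mem_comap, ← Submodule.Quotient.mk_eq_zero]
    exact Subtype.ext_iff
  obtain ⟨ρ, hρ, hρs⟩ := LinearMap.exists_injective_comp_eq hs hkers
  have hE : NoHomsTo Λ M (k + 1) (V ⧸ p) := hV.of_surjective p.mkQ_surjective
  have hEne : ∃ y : V ⧸ p, y ≠ 0 := by
    obtain ⟨y, hy⟩ := (hM.schurian k).1
    obtain ⟨z, rfl⟩ := hπ y
    exact ⟨z, fun hz => hy (by rw [hz, map_zero])⟩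
  refine hM.maximal (V ⧸ p) hEne (k + 1) k.isLt ⟨fun i hi f => ?_, hE⟩
  by_cases hπf : π ∘ₗ f = 0
  · have hfA : ∀ x, f x ∈ A := fun x => hkerπ ▸ LinearMap.mem_ker.2 congr($hπf x)
    have hf : f.codRestrict A hfA = 0 := (LinearMap.cancel_left hρ).1 <| by
      rw [hM.hom_eq_zero i j (by omega) (ρ ∘ₗ _), LinearMap.comp_zero]
    ext x
    exact congrArg Subtype.val congr($hf x)
  · obtain rfl : k = i := by
      by_contra hik
      exact hπf (hM.hom_eq_zero i k (by omega) _)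
    obtain ⟨r, hr⟩ := π.exists_retraction_ker f ((hM.schurian k).2 _ hπf)
    have hrx : r (p.mkQ x) = ⟨p.mkQ x, hkerπ ▸ (s x).2⟩ := hr ⟨_, hkerπ ▸ (s x).2⟩
    have hτx : (ρ ∘ₗ Submodule.inclusion hkerπ.le ∘ₗ r) (p.mkQ x) = h x := by
      rw [← hρs, LinearMap.comp_apply, LinearMap.comp_apply, hrx]
      rfl
    exact (hx (hτx.symm.trans congr($(hE j hj _) (p.mkQ x)))).elim

lemma torsionPart_zero_eq_bot (hM : IsMaximalForwardHomOrthogonal Λ M) {X : Type}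
    [AddCommGroup X] [Module Λ X] [IsNoetherian Λ X] [IsArtinian Λ X] :
    torsionPart Λ M 0 X = ⊥ := by
  by_contra hne
  obtain ⟨y, hy, hy0⟩ := (Submodule.ne_bot_iff _).1 hne
  exact hM.maximal _ ⟨⟨y, hy⟩, fun h => hy0 (congrArg Subtype.val h)⟩ 0 m.zero_le
    ⟨fun i hi => absurd hi i.val.not_lt_zero, noHomsTo_torsionPart⟩

lemma isFiltered (hM : IsMaximalForwardHomOrthogonal Λ M) [∀ i, IsNoetherian Λ (M i)]
    [∀ i, IsArtinian Λ (M i)] (k : Fin m) {Y : Type} [AddCommGroup Y] [Module Λ Y]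
    [IsNoetherian Λ Y] [IsArtinian Λ Y] (hY : NoHomsTo Λ M (k + 1) Y)
    (hY' : ∀ Z : Submodule Λ Y, NoHomsTo Λ M k Z → Z = ⊥) : IsFiltered Λ (M k) Y := by
  suffices H : ∀ V : Submodule Λ Y, NoHomsTo Λ M (k + 1) V → IsFiltered Λ (M k) V from
    (H ⊤ (hY.of_surjective Submodule.topEquiv.symm.surjective)).of_linearEquiv Submodule.topEquiv
  intro V
  induction V using WellFoundedLT.induction with
  | _ V IH =>
  intro hV
  by_cases hV0 : V = ⊥
  · subst hV0
    exact .of_subsingleton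
  obtain ⟨j, hkj, g, hg⟩ : ∃ j : Fin m, (k : ℕ) ≤ j ∧ ∃ g : V →ₗ[Λ] M j, g ≠ 0 := by
    by_contra! h
    exact hV0 (hY' V h)
  obtain rfl : j = k := by
    by_contra hjk
    exact hg (hV j (by omega) g)
  have hgs := hM.surjective_of_ne_zero hV hg
  set W := (LinearMap.ker g).map V.subtype
  have hWV : W < V := by
    refine (Submodule.map_subtype_le _ _).lt_of_ne fun hWV => hg ?_
    rw [← LinearMap.ker_eq_top, ← Submodule.comap_map_eq_of_injective V.injective_subtype
      (LinearMap.ker g), hWV, Submodule.comap_subtype_self]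
  set e := Submodule.equivMapOfInjective V.subtype V.injective_subtype (LinearMap.ker g)
  have hW := IH W hWV ((hM.noHomsTo_ker hV hgs).of_surjective e.surjective)
  exact (hW.of_linearEquiv e.symm).of_quotientEquiv _ (g.quotKerEquivOfSurjective hgs)

end IsMaximalForwardHomOrthogonal

/-- If `M₁, ..., M_m` is a maximal forward hom-orthogonal sequence of
Schurian `Λ`-modules (`Hom(M_i, M_j) = 0` for `i < j`, each `M_i` Schurian, and no nonzero
module can be inserted anywhere preserving weak forward hom-orthogonality), then every
`Λ`-module `X` has a filtration `0 = X₀ ⊆ X₁ ⊆ ... ⊆ X_m = X` with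
`X_k/X_{k−1} ∈ E(M_k)` for each `k`. -/
theorem stmt17 (Λ : Type) [Ring Λ] (m : ℕ)
    (M : Fin m → Type) [∀ i, AddCommGroup (M i)] [∀ i, Module Λ (M i)]
    [∀ i, IsNoetherian Λ (M i)] [∀ i, IsArtinian Λ (M i)]
    (hSch : ∀ i, Schurian Λ (M i))
    (horth : ∀ i j : Fin m, i < j → ∀ f : M i →ₗ[Λ] M j, f = 0)
    (hmax : ∀ (N : Type) [AddCommGroup N] [Module Λ N] [IsNoetherian Λ N] [IsArtinian Λ N],
      (∃ y : N, y ≠ 0) → ∀ k : ℕ, k ≤ m →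
        ¬ ((∀ i : Fin m, (i : ℕ) < k → ∀ f : M i →ₗ[Λ] N, f = 0) ∧
           (∀ j : Fin m, k ≤ (j : ℕ) → ∀ g : N →ₗ[Λ] M j, g = 0)))
    (X : Type) [AddCommGroup X] [Module Λ X] [IsNoetherian Λ X] [IsArtinian Λ X] :
    ∃ F : Fin (m + 1) → Submodule Λ X, Monotone F ∧ F 0 = ⊥ ∧ F (Fin.last m) = ⊤ ∧
      ∀ i : Fin m, IsFiltered Λ (M i)
        (↥(F i.succ) ⧸ Submodule.comap (F i.succ).subtype (F i.castSucc)) := by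
  have hM : IsMaximalForwardHomOrthogonal Λ M := ⟨hSch, horth, hmax⟩
  refine ⟨fun i => torsionPart Λ M i X, fun i j hij => torsionPart_mono hij,
    hM.torsionPart_zero_eq_bot, torsionPart_eq_top, fun i => hM.isFiltered i ?_ fun Z hZ => ?_⟩
  · exact noHomsTo_torsionPart.of_surjective (Submodule.mkQ_surjective _)
  · exact eq_bot_of_noHomsTo_quotient_torsionPart (torsionPart_mono i.castSucc_le_succ) hZ
end
end

section
/- Let Λ be hereditary and let X, M be Λ-modules such that the interiors of D(X) and D(M) intersect (there is x₀ with x₀·dim X = 0, x₀·dim M = 0, x₀·dim X' < 0 for all nonzero proper X' ⊊ X, and x₀·dim M' < 0 for all nonzero proper M' ⊊ M, with X ≇ M). Then X and M are hom-orthogonal: Hom_Λ(X,M) = 0 = Hom_Λ(M,X). -/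
open scoped BigOperators

noncomputable section

lemma dprod_add {n : ℕ} (x : Fin n → ℝ) (u v : Fin n → ℕ) :
    dprod x (u + v) = dprod x u + dprod x v := by
  simp [dprod, mul_add, Finset.sum_add_distrib]

lemma key (Λ : Type) [Ring Λ] {n : ℕ}
    (d : (N : Type) → [AddCommGroup N] → [Module Λ N] → Fin n → ℕ)
    (hiso : ∀ (N N' : Type) [AddCommGroup N] [Module Λ N] [AddCommGroup N'] [Module Λ N']
      [IsNoetherian Λ N] [IsArtinian Λ N], (N ≃ₗ[Λ] N') → d N = d N')
    (hadd : ∀ (N : Type) [AddCommGroup N] [Module Λ N] [IsNoetherian Λ N] [IsArtinian Λ N]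
      (A : Submodule Λ N), d ↥A + d (N ⧸ A) = d N)
    (X M : Type) [AddCommGroup X] [Module Λ X] [IsNoetherian Λ X] [IsArtinian Λ X]
    [AddCommGroup M] [Module Λ M] [IsNoetherian Λ M] [IsArtinian Λ M]
    (x₀ : Fin n → ℝ)
    (hX0 : dprod x₀ (d X) = 0) (hM0 : dprod x₀ (d M) = 0)
    (hXlt : ∀ X' : Submodule Λ X, X' ≠ ⊥ → X' ≠ ⊤ → dprod x₀ (d ↥X') < 0)
    (hMlt : ∀ M' : Submodule Λ M, M' ≠ ⊥ → M' ≠ ⊤ → dprod x₀ (d ↥M') < 0)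
    (hne : IsEmpty (X ≃ₗ[Λ] M)) :
    ∀ f : X →ₗ[Λ] M, f = 0 := by
  intro f
  by_contra hf
  -- d (X ⧸ ker f) = d (range f)
  have hquot : d (X ⧸ LinearMap.ker f) = d ↥(LinearMap.range f) :=
    hiso _ _ f.quotKerEquivRange
  have hsum : dprod x₀ (d ↥(LinearMap.ker f)) + dprod x₀ (d ↥(LinearMap.range f)) = 0 := by
    rw [← hX0, ← hadd X (LinearMap.ker f), dprod_add, hquot]
  have hrngne : LinearMap.range f ≠ ⊥ := by
    simpa [LinearMap.range_eq_bot] using hf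
  have hkerne : LinearMap.ker f ≠ ⊤ := by
    simpa [LinearMap.ker_eq_top] using hf
  by_cases hk : LinearMap.ker f = ⊥
  · -- range has dprod 0, so range = ⊤, giving an iso X ≃ M
    have hquot2 : d (X ⧸ LinearMap.ker f) = d X :=
      hiso _ _ (Submodule.quotEquivOfEqBot _ hk)
    have hk0 : d ↥(LinearMap.ker f) = 0 := by
      have h := hadd X (LinearMap.ker f)
      rw [hquot2] at h
      funext i
      have := congrFun h i
      simpa using this
    have h0 : dprod x₀ (d ↥(LinearMap.ker f)) = 0 := by simp [hk0, dprod]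
    have hr0 : dprod x₀ (d ↥(LinearMap.range f)) = 0 := by linarith
    rcases eq_or_ne (LinearMap.range f) ⊤ with hr | hr
    · have hbij : Function.Bijective f :=
        ⟨LinearMap.ker_eq_bot.mp hk, LinearMap.range_eq_top.mp hr⟩
      exact hne.elim (LinearEquiv.ofBijective f hbij)
    · exact absurd (hMlt _ hrngne hr) (by linarith)
  · have hklt : dprod x₀ (d ↥(LinearMap.ker f)) < 0 := hXlt _ hk hkerne
    have hrgt : dprod x₀ (d ↥(LinearMap.range f)) > 0 := by linarith
    rcases eq_or_ne (LinearMap.range f) ⊤ with hr | hr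
    · have : d ↥(LinearMap.range f) = d M := by
        rw [hiso ↥(LinearMap.range f) M (by rw [hr]; exact Submodule.topEquiv)]
      rw [this, hM0] at hrgt; exact lt_irrefl _ hrgt
    · exact absurd (hMlt _ hrngne hr) (by linarith)

/-- Let `Λ` be hereditary and `X, M` nonisomorphic `Λ`-modules such that the
interiors of `D(X)` and `D(M)` intersect: there is `x₀` with `x₀·dim X = 0 = x₀·dim M`,
`x₀·dim X' < 0` for all nonzero proper `X' ⊊ X` and `x₀·dim M' < 0` for all nonzero proper
`M' ⊊ M`. Then `X` and `M` are hom-orthogonal: `Hom_Λ(X, M) = 0 = Hom_Λ(M, X)`. -/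
theorem stmt19 (K Λ : Type) [Field K] [Ring Λ] [Algebra K Λ] [FiniteDimensional K Λ]
    (hher : ∀ I : Ideal Λ, Module.Projective Λ ↥I)
    {n : ℕ}
    (d : (N : Type) → [AddCommGroup N] → [Module Λ N] → Fin n → ℕ)
    (hiso : ∀ (N N' : Type) [AddCommGroup N] [Module Λ N] [AddCommGroup N'] [Module Λ N']
      [IsNoetherian Λ N] [IsArtinian Λ N], (N ≃ₗ[Λ] N') → d N = d N')
    (hadd : ∀ (N : Type) [AddCommGroup N] [Module Λ N] [IsNoetherian Λ N] [IsArtinian Λ N]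
      (A : Submodule Λ N), d ↥A + d (N ⧸ A) = d N)
    (hzero : ∀ (N : Type) [AddCommGroup N] [Module Λ N] [IsNoetherian Λ N] [IsArtinian Λ N],
      (d N = 0 ↔ ∀ y : N, y = 0))
    (X M : Type) [AddCommGroup X] [Module Λ X] [IsNoetherian Λ X] [IsArtinian Λ X]
    [AddCommGroup M] [Module Λ M] [IsNoetherian Λ M] [IsArtinian Λ M]
    (x₀ : Fin n → ℝ)
    (hX0 : dprod x₀ (d X) = 0) (hM0 : dprod x₀ (d M) = 0)
    (hXlt : ∀ X' : Submodule Λ X, X' ≠ ⊥ → X' ≠ ⊤ → dprod x₀ (d ↥X') < 0)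
    (hMlt : ∀ M' : Submodule Λ M, M' ≠ ⊥ → M' ≠ ⊤ → dprod x₀ (d ↥M') < 0)
    (hne : IsEmpty (X ≃ₗ[Λ] M)) :
    (∀ f : X →ₗ[Λ] M, f = 0) ∧ (∀ g : M →ₗ[Λ] X, g = 0) := by
  refine ⟨key Λ d hiso hadd X M x₀ hX0 hM0 hXlt hMlt hne,
    key Λ d hiso hadd M X x₀ hM0 hX0 hMlt hXlt ⟨fun e => hne.elim e.symm⟩⟩
end
end
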